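/- Let m = 3 and let π be a probability density on ℝ with positive values everywhere, used as the common utility distribution shape. For independent utilities u_i ~ π(· - θ_i) with θ₁ > 0 and θ₂ = θ₃ = 0, write p_{σ} for the probability of each of the six rankings. Then p₁₂₃ = p₁₃₂, p₂₃₁ = p₃₂₁, p₂₁₃ = p₃₁₂, but p₁₃₂ ≠ p₂₃₁; consequently p₁₃₂/p₃₁₂ ≠ p₂₃₁/p₂₁₃. -/

import Mathlib

/-!
The equalities hold because alternatives 2 and 3 have the same shift. For the inequality, write
`R(A, B, C)` for the probability that alternatives with shifts `A`, `B`, `C` are ranked in this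
order. Since `π > 0`, the tail `w ↦ ∫_w^∞ π` is strictly decreasing, so `R` is strictly increasing
in `A`; substituting `z ↦ z + C` in the outer integral shows that `R` is strictly decreasing in
`C`. Hence `p₁₃₂ = R(t, 0, 0) > R(0, 0, 0) > R(0, 0, t) = p₂₃₁`, and the ratios differ because
they share the positive denominator `p₃₁₂ = p₂₁₃`.
-/

open MeasureTheory

open Set

theorem integral_lt_integral_of_forall_lt {α : Type*} [MeasurableSpace α] {μ : Measure α}
    (hμ : μ ≠ 0) {f g : α → ℝ} (hf : Integrable f μ) (hg : Integrable g μ)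
    (hlt : ∀ x, f x < g x) : ∫ x, f x ∂μ < ∫ x, g x ∂μ := by
  have hsub : ∀ x, 0 < g x - f x := fun x => sub_pos.2 (hlt x)
  have hsupp : Function.support (fun x => g x - f x) = univ :=
    eq_univ_of_forall fun x => (hsub x).ne'
  rw [← sub_pos, ← integral_sub hg hf,
    integral_pos_iff_support_of_nonneg (fun x => (hsub x).le) (hg.sub hf), hsupp]
  exact Measure.measure_univ_pos.2 hμ

theorem integral_pos_of_forall_pos {α : Type*} [MeasurableSpace α] {μ : Measure α}
    (hμ : μ ≠ 0) {f : α → ℝ} (hf : Integrable f μ) (hpos : ∀ x, 0 < f x) :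
    0 < ∫ x, f x ∂μ := by
  simpa using integral_lt_integral_of_forall_lt hμ (integrable_zero _ _ μ) hf hpos

noncomputable def upperTail (f : ℝ → ℝ) (w : ℝ) : ℝ := ∫ x in Ioi w, f x

section upperTail

variable {f : ℝ → ℝ}

theorem upperTail_comp_sub_right (f : ℝ → ℝ) (a w : ℝ) :
    upperTail (fun x => f (x - a)) w = upperTail f (w - a) := by
  have hpre : (· - a) ⁻¹' Ioi (w - a) = Ioi w := by ext x; simp
  rw [upperTail, upperTail, ← hpre]
  exact (measurePreserving_sub_right volume a).setIntegral_preimage_emb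
    (measurableEmbedding_subRight a) f _

theorem norm_upperTail_le (hf : Integrable f) (w : ℝ) : ‖upperTail f w‖ ≤ ∫ x, ‖f x‖ :=
  (norm_integral_le_integral_norm _).trans
    (setIntegral_le_integral hf.norm (ae_of_all _ fun _ => norm_nonneg _))

theorem antitone_upperTail (hf : Integrable f) (hf0 : 0 ≤ f) : Antitone (upperTail f) :=
  fun _ _ hab => setIntegral_mono_set hf.integrableOn (ae_of_all _ hf0)
    (ae_of_all _ (Ioi_subset_Ioi hab))

theorem upperTail_pos (hf : Integrable f) (hpos : ∀ x, 0 < f x) (w : ℝ) : 0 < upperTail f w :=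
  integral_pos_of_forall_pos (by simp) hf.integrableOn hpos

theorem strictAnti_upperTail (hf : Integrable f) (hpos : ∀ x, 0 < f x) :
    StrictAnti (upperTail f) := by
  intro a b hab
  have hsplit : upperTail f a = (∫ x in Ioc a b, f x) + upperTail f b := by
    rw [upperTail, upperTail, ← setIntegral_union (Ioc_disjoint_Ioi le_rfl) measurableSet_Ioi
      hf.integrableOn hf.integrableOn, Ioc_union_Ioi_eq_Ioi hab.le]
  have hmid : 0 < ∫ x in Ioc a b, f x :=
    integral_pos_of_forall_pos (by simp [hab]) hf.integrableOn hpos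
  linarith

theorem Integrable.mul_upperTail_comp {g : ℝ → ℝ} (hg : Integrable g) (hf : Integrable f)
    (hf0 : 0 ≤ f) {φ : ℝ → ℝ} (hφ : Measurable φ) :
    Integrable (fun y => g y * upperTail f (φ y)) :=
  hg.mul_bdd ((antitone_upperTail hf hf0).measurable.comp hφ).aestronglyMeasurable
    (ae_of_all _ fun y => norm_upperTail_le hf (φ y))

end upperTail

noncomputable def rankingProb (π : ℝ → ℝ) (A B C : ℝ) : ℝ :=
  ∫ z, π (z - C) * upperTail (fun y => π (y - B) * upperTail (fun x => π (x - A)) y) z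

/-- Density of `u_b` at `y`, jointly with the event `u_a > y`. -/
noncomputable def pairDensity (π : ℝ → ℝ) (A B y : ℝ) : ℝ := π (y - B) * upperTail π (y - A)

section rankingProb

variable {π : ℝ → ℝ}

theorem rankingProb_eq (A B C : ℝ) :
    rankingProb π A B C = ∫ z, π (z - C) * upperTail (pairDensity π A B) z := by
  simp only [rankingProb, upperTail_comp_sub_right]
  rfl

theorem pairDensity_pos (hπ : Integrable π) (hπ_pos : ∀ x, 0 < π x)
    (A B y : ℝ) : 0 < pairDensity π A B y :=
  mul_pos (hπ_pos _) (upperTail_pos hπ hπ_pos _)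

theorem integrable_pairDensity (hπ : Integrable π) (hπ_pos : ∀ x, 0 < π x)
    (A B : ℝ) : Integrable (pairDensity π A B) :=
  Integrable.mul_upperTail_comp (hπ.comp_sub_right B) hπ (fun x => (hπ_pos x).le)
    (measurable_sub_const A)

theorem integrable_mul_upperTail_pairDensity (hπ : Integrable π) (hπ_pos : ∀ x, 0 < π x)
    {C : ℝ} {φ : ℝ → ℝ} (hφ : Measurable φ) (A B : ℝ) :
    Integrable (fun z => π (z - C) * upperTail (pairDensity π A B) (φ z)) :=
  Integrable.mul_upperTail_comp (hπ.comp_sub_right C) (integrable_pairDensity hπ hπ_pos A B)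
    (fun y => (pairDensity_pos hπ hπ_pos A B y).le) hφ

theorem rankingProb_pos (hπ : Integrable π) (hπ_pos : ∀ x, 0 < π x)
    (A B C : ℝ) : 0 < rankingProb π A B C := by
  rw [rankingProb_eq]
  exact integral_pos_of_forall_pos (NeZero.ne _)
    (integrable_mul_upperTail_pairDensity hπ hπ_pos measurable_id A B) fun z =>
      mul_pos (hπ_pos _) (upperTail_pos (integrable_pairDensity hπ hπ_pos A B)
        (pairDensity_pos hπ hπ_pos A B) z)

theorem strictMono_rankingProb_top (hπ : Integrable π) (hπ_pos : ∀ x, 0 < π x)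
    (B C : ℝ) : StrictMono (fun A => rankingProb π A B C) := by
  intro A A' hA
  have hinner : ∀ z, upperTail (pairDensity π A B) z < upperTail (pairDensity π A' B) z :=
    fun z => integral_lt_integral_of_forall_lt (by simp)
      (integrable_pairDensity hπ hπ_pos A B).integrableOn
      (integrable_pairDensity hπ hπ_pos A' B).integrableOn fun y =>
        mul_lt_mul_of_pos_left (strictAnti_upperTail hπ hπ_pos (by linarith)) (hπ_pos _)
  simp only [rankingProb_eq]
  exact integral_lt_integral_of_forall_lt (NeZero.ne _)
    (integrable_mul_upperTail_pairDensity hπ hπ_pos measurable_id A B)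
    (integrable_mul_upperTail_pairDensity hπ hπ_pos measurable_id A' B)
    fun z => mul_lt_mul_of_pos_left (hinner z) (hπ_pos _)

theorem strictAnti_rankingProb_bottom (hπ : Integrable π) (hπ_pos : ∀ x, 0 < π x)
    (A B : ℝ) : StrictAnti (fun C => rankingProb π A B C) := by
  have hshift : ∀ C, rankingProb π A B C = ∫ z, π z * upperTail (pairDensity π A B) (z + C) :=
    fun C => by
      rw [rankingProb_eq, ← integral_add_right_eq_self _ C]
      simp_rw [add_sub_cancel_right]
  intro C C' hC
  simp only [hshift]
  refine integral_lt_integral_of_forall_lt (NeZero.ne _) ?_ ?_ fun z =>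
    mul_lt_mul_of_pos_left (strictAnti_upperTail (integrable_pairDensity hπ hπ_pos A B)
      (pairDensity_pos hπ hπ_pos A B) (by linarith)) (hπ_pos z)
  all_goals simpa using
    integrable_mul_upperTail_pairDensity hπ hπ_pos (C := 0) (measurable_add_const _) A B

end rankingProb

theorem three_alternatives_ranking_probabilities_general
    (π : ℝ → ℝ)
    (hπ_pos : ∀ x, 0 < π x)
    (hπ_int : ∫ x : ℝ, π x = 1)
    (t : ℝ) (ht : 0 < t)
    -- Pr(u_i > u_j > u_k) where the top, middle, bottom alternatives have
    -- mean shifts A, B, C respectively: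
    (p : ℝ → ℝ → ℝ → ℝ)
    (hp : ∀ A B C : ℝ, p A B C =
      ∫ z : ℝ, π (z - C) * (∫ y in Set.Ioi z, π (y - B) * (∫ x in Set.Ioi y, π (x - A))))
    -- the six ranking probabilities with θ₁ = t, θ₂ = θ₃ = 0:
    (p123 p132 p213 p231 p312 p321 : ℝ)
    (h123 : p123 = p t 0 0) (h132 : p132 = p t 0 0)
    (h213 : p213 = p 0 t 0) (h312 : p312 = p 0 t 0)
    (h231 : p231 = p 0 0 t) (h321 : p321 = p 0 0 t) :
    p123 = p132 ∧ p231 = p321 ∧ p213 = p312 ∧ p132 ≠ p231 ∧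
      p132 / p312 ≠ p231 / p213 := by
  have hπ : Integrable π := Integrable.of_integral_ne_zero (by rw [hπ_int]; exact one_ne_zero)
  have hp' : ∀ A B C, p A B C = rankingProb π A B C := hp
  have hlt : p 0 0 t < p t 0 0 := by
    rw [hp', hp']
    exact (strictAnti_rankingProb_bottom hπ hπ_pos 0 0 ht).trans
      (strictMono_rankingProb_top hπ hπ_pos 0 0 ht)
  have hpos : 0 < p 0 t 0 := (hp' 0 t 0).symm ▸ rankingProb_pos hπ hπ_pos 0 t 0
  subst h123 h132 h213 h312 h231 h321
  exact ⟨rfl, rfl, rfl, hlt.ne', ((div_lt_div_iff_of_pos_right hpos).2 hlt).ne'⟩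

theorem three_alternatives_ranking_probabilities
    (π : ℝ → ℝ)
    (hπ_pos : ∀ x, 0 < π x) (hπ_cont : Continuous π)
    (hπ_int : ∫ x : ℝ, π x = 1)
    (t : ℝ) (ht : 0 < t)
    -- Pr(u_i > u_j > u_k) where the top, middle, bottom alternatives have
    -- mean shifts A, B, C respectively:
    (p : ℝ → ℝ → ℝ → ℝ)
    (hp : ∀ A B C : ℝ, p A B C =
      ∫ z : ℝ, π (z - C) * (∫ y in Set.Ioi z, π (y - B) * (∫ x in Set.Ioi y, π (x - A))))
    -- the six ranking probabilities with θ₁ = t, θ₂ = θ₃ = 0: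
    (p123 p132 p213 p231 p312 p321 : ℝ)
    (h123 : p123 = p t 0 0) (h132 : p132 = p t 0 0)
    (h213 : p213 = p 0 t 0) (h312 : p312 = p 0 t 0)
    (h231 : p231 = p 0 0 t) (h321 : p321 = p 0 0 t) :
    p123 = p132 ∧ p231 = p321 ∧ p213 = p312 ∧ p132 ≠ p231 ∧
      p132 / p312 ≠ p231 / p213 :=
  three_alternatives_ranking_probabilities_general π hπ_pos hπ_int t ht p hp p123 p132 p213 p231
    p312 p321 h123 h132 h213 h312 h231 h321
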